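/- Let κ > 0, let J = (J_1,…,J_s) be an ordered partition of {1,…,q}, and let 0 = k_0 < k_1 < … < k_u = s be integers; let J′ := (J_1∪…∪J_{k_1}, J_{k_1+1}∪…∪J_{k_2}, …, J_{k_{u−1}+1}∪…∪J_{k_u}) be the corresponding coarsening of J. Let c ∈ ℝ^q be such that c′ := π_κ(c) ∈ relint(κ·τ_J), so that the numbers t_k := c_j − c′_j (j ∈ J_k) are well-defined for k = 1,…,s. If c belongs to the closure of the preimage π_κ^{−1}(relint(κ·τ_{J′})), then t_{k_{i−1}+1} = t_{k_{i−1}+2} = … = t_{k_i} for each i = 1,…,u. -/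

import Mathlib

open Set Pointwise

noncomputable section

/-- The vertex `P_ρ` of the permutohedron: the point whose `ρ(k)`-th coordinate is
`k − (q+1)/2` (with `k` running through `1,…,q`, here 0-indexed as `Fin q`). -/
def vertexPoint (q : ℕ) (ρ : Equiv.Perm (Fin q)) : EuclideanSpace ℝ (Fin q) :=
  WithLp.toLp 2 (fun i => ((ρ.symm i : ℕ) + 1 : ℝ) - ((q : ℝ) + 1) / 2)

/-- The permutohedron `P^{q−1} ⊂ ℝ^q`: the convex hull of the points `P_ρ`. -/
def permutohedron (q : ℕ) : Set (EuclideanSpace ℝ (Fin q)) :=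
  convexHull ℝ (Set.range (vertexPoint q))

/-- An ordered partition `J = (J_1,…,J_s)` of `{1,…,q}` into `s` nonempty subsets. -/
structure OrderedPartition (q s : ℕ) where
  blocks : Fin s → Finset (Fin q)
  nonempty : ∀ k, (blocks k).Nonempty
  disjoint : ∀ k l, k ≠ l → Disjoint (blocks k) (blocks l)
  covers : ∀ j : Fin q, ∃ k, j ∈ blocks k

/-- `cumCard J n = r_n`, the total cardinality of the first `n` blocks. -/
def cumCard {q s : ℕ} (J : OrderedPartition q s) (n : ℕ) : ℕ :=
  ∑ i ∈ Finset.univ.filter (fun i : Fin s => (i : ℕ) < n), (J.blocks i).card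

/-- A permutation `π` is compatible with the ordered partition `J` if it maps the
`k`-th consecutive block `{r_{k−1}+1,…,r_k}` (0-indexed: `[r_{k−1}, r_k)`) onto `J_k`;
these are exactly the permutations `σρ` with `σ` in the Young subgroup. -/
def compatiblePerm {q s : ℕ} (J : OrderedPartition q s) (π : Equiv.Perm (Fin q)) : Prop :=
  ∀ (k : Fin s) (i : Fin q),
    π i ∈ J.blocks k ↔ cumCard J (k : ℕ) ≤ (i : ℕ) ∧ (i : ℕ) < cumCard J ((k : ℕ) + 1)

/-- The face `τ_J` of the permutohedron corresponding to the ordered partition `J`. -/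
def face (q s : ℕ) (J : OrderedPartition q s) : Set (EuclideanSpace ℝ (Fin q)) :=
  convexHull ℝ {x | ∃ π : Equiv.Perm (Fin q), compatiblePerm J π ∧ x = vertexPoint q π}

/-- The metric projection onto a set `K`: a point of `K` at minimal distance
(unique when `K` is compact, convex and nonempty in Euclidean space). -/
def metricProj {E : Type*} [MetricSpace E] [Nonempty E] (K : Set E) (c : E) : E :=
  Classical.epsilon fun y => y ∈ K ∧ ∀ z ∈ K, dist c y ≤ dist c z

/-!
The residual `d - π_κ(d)` of a metric projection onto a convex set is an outward normal there:
`⟪d - π_κ(d), z - π_κ(d)⟫ ≤ 0` for every `z` in the set. When `π_κ(d)` lies in the relative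
interior of a face, the normal is orthogonal to the whole face. Swapping two coordinates that lie
in the same block of `J′` maps a vertex of `τ_{J′}` to another vertex of `τ_{J′}`, and the difference
of the two vertices is a nonzero multiple of `e_j - e_{j'}`; hence `d - π_κ(d)` has equal `j`- and
`j'`-coordinates. This closed condition passes from the preimage of `relint(κ·τ_{J′})` to its closure,
because `π_κ` is `1`-Lipschitz.
-/

open scoped RealInnerProductSpace Topology

section MetricProj

variable {E : Type*}

theorem metricProj_mem_and_dist_le [MetricSpace E] [Nonempty E] {K : Set E} (hK : IsCompact K)
    (hne : K.Nonempty) (c : E) :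
    metricProj K c ∈ K ∧ ∀ z ∈ K, dist c (metricProj K c) ≤ dist c z := by
  obtain ⟨y, hyK, hy⟩ := hK.exists_isMinOn hne (continuous_const.dist continuous_id).continuousOn
  exact Classical.epsilon_spec (p := fun y => y ∈ K ∧ ∀ z ∈ K, dist c y ≤ dist c z)
    ⟨y, hyK, fun z hz => hy hz⟩

theorem exists_pos_add_smul_sub_mem_of_mem_intrinsicInterior [NormedAddCommGroup E]
    [NormedSpace ℝ E] {S : Set E} {x y : E}
    (hx : x ∈ intrinsicInterior ℝ S) (hy : y ∈ S) : ∃ ε : ℝ, 0 < ε ∧ x + ε • (x - y) ∈ S := by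
  obtain ⟨x', hx', rfl⟩ := mem_intrinsicInterior.1 hx
  have hline : ∀ ε : ℝ, (x' : E) + ε • ((x' : E) - y) ∈ affineSpan ℝ S := fun ε => by
    simpa [vsub_eq_sub, vadd_eq_add, add_comm] using
      AffineSubspace.smul_vsub_vadd_mem _ ε x'.2 (subset_affineSpan ℝ S hy) x'.2
  let f : ℝ → affineSpan ℝ S := fun ε => ⟨_, hline ε⟩
  have hf : Filter.Tendsto f (𝓝[>] 0) (𝓝 x') := by
    have hcont : Continuous f := by fun_prop
    simpa [f] using hcont.continuousWithinAt (s := Ioi 0) (x := 0) |>.tendsto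
  obtain ⟨ε, hεS, hε⟩ := ((hf.eventually (isOpen_interior.mem_nhds hx')).and
    self_mem_nhdsWithin).exists
  exact ⟨ε, hε, interior_subset (s := ((↑) : affineSpan ℝ S → E) ⁻¹' S) hεS⟩

variable [NormedAddCommGroup E] [InnerProductSpace ℝ E]

theorem inner_sub_metricProj_nonpos {K : Set E} (hK : IsCompact K) (hKc : Convex ℝ K)
    (hne : K.Nonempty) (c : E) {z : E} (hz : z ∈ K) :
    ⟪c - metricProj K c, z - metricProj K c⟫ ≤ 0 := by
  obtain ⟨hp, hmin⟩ := metricProj_mem_and_dist_le hK hne c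
  have := hne.to_subtype
  refine (norm_eq_iInf_iff_real_inner_le_zero hKc hp).1 (le_antisymm ?_ ?_) z hz
  · exact le_ciInf fun w => by simpa only [dist_eq_norm] using hmin w w.2
  · exact ciInf_le ⟨0, fun _ ⟨w, h⟩ => h ▸ norm_nonneg _⟩ (⟨_, hp⟩ : K)

theorem lipschitzWith_metricProj {K : Set E} (hK : IsCompact K) (hKc : Convex ℝ K)
    (hne : K.Nonempty) : LipschitzWith 1 (metricProj K) := by
  refine LipschitzWith.of_dist_le_mul fun c d => ?_
  rw [NNReal.coe_one, one_mul, dist_eq_norm, dist_eq_norm]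
  set p := metricProj K c
  set r := metricProj K d
  have hc : ⟪c - p, r - p⟫ ≤ 0 :=
    inner_sub_metricProj_nonpos hK hKc hne c (metricProj_mem_and_dist_le hK hne d).1
  have hd : ⟪d - r, p - r⟫ ≤ 0 :=
    inner_sub_metricProj_nonpos hK hKc hne d (metricProj_mem_and_dist_le hK hne c).1
  rw [← neg_sub p r, inner_neg_right] at hc
  have hsplit : c - d = (p - r) + (c - p) - (d - r) := by abel
  have hsq : ‖p - r‖ ^ 2 ≤ ‖c - d‖ * ‖p - r‖ :=
    calc ‖p - r‖ ^ 2 ≤ ⟪c - d, p - r⟫ := by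
          rw [hsplit, inner_sub_left, inner_add_left, real_inner_self_eq_norm_sq]; linarith
      _ ≤ ‖c - d‖ * ‖p - r‖ := real_inner_le_norm _ _
  nlinarith [norm_nonneg (p - r), norm_nonneg (c - d)]

theorem inner_eq_zero_of_mem_intrinsicInterior {S : Set E} {x v : E}
    (hx : x ∈ intrinsicInterior ℝ S) (hle : ∀ z ∈ S, ⟪v, z - x⟫ ≤ 0) {y : E} (hy : y ∈ S) :
    ⟪v, y - x⟫ = 0 := by
  obtain ⟨ε, hε, hz⟩ := exists_pos_add_smul_sub_mem_of_mem_intrinsicInterior hx hy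
  have h := hle _ hz
  rw [add_sub_cancel_left, ← neg_sub y x, smul_neg, inner_neg_right, inner_smul_right] at h
  nlinarith [hle y hy]

theorem inner_sub_metricProj_eq_zero {K S : Set E} (hK : IsCompact K) (hKc : Convex ℝ K)
    (hSK : S ⊆ K) {d : E} (hd : metricProj K d ∈ intrinsicInterior ℝ S) {y y' : E}
    (hy : y ∈ S) (hy' : y' ∈ S) : ⟪d - metricProj K d, y - y'⟫ = 0 := by
  have hne : K.Nonempty := ⟨_, hSK (intrinsicInterior_subset hd)⟩
  have hle : ∀ z ∈ S, ⟪d - metricProj K d, z - metricProj K d⟫ ≤ 0 :=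
    fun z hz => inner_sub_metricProj_nonpos hK hKc hne d (hSK hz)
  rw [← sub_sub_sub_cancel_right y y' (metricProj K d), inner_sub_right,
    inner_eq_zero_of_mem_intrinsicInterior hd hle hy,
    inner_eq_zero_of_mem_intrinsicInterior hd hle hy', sub_zero]

end MetricProj

section Permutohedron

variable {q s : ℕ}

theorem isCompact_permutohedron (q : ℕ) : IsCompact (permutohedron q) :=
  (finite_range (vertexPoint q)).isCompact_convexHull (𝕜 := ℝ)

theorem convex_permutohedron (q : ℕ) : Convex ℝ (permutohedron q) :=
  convex_convexHull ℝ _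

theorem permutohedron_nonempty (q : ℕ) : (permutohedron q).Nonempty :=
  convexHull_nonempty_iff.2 (range_nonempty _)

theorem vertexPoint_mem_face {J : OrderedPartition q s} {π : Equiv.Perm (Fin q)}
    (hπ : compatiblePerm J π) : vertexPoint q π ∈ face q s J :=
  subset_convexHull ℝ _ ⟨π, hπ, rfl⟩

theorem face_subset_permutohedron (J : OrderedPartition q s) : face q s J ⊆ permutohedron q :=
  convexHull_mono <| by rintro _ ⟨π, -, rfl⟩; exact mem_range_self π

theorem exists_compatiblePerm_of_nonempty {J : OrderedPartition q s}
    (h : (face q s J).Nonempty) : ∃ π, compatiblePerm J π := by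
  obtain ⟨_, π, hπ, -⟩ := convexHull_nonempty_iff.1 h
  exact ⟨π, hπ⟩

theorem compatiblePerm.swap_mul {J : OrderedPartition q s} {π : Equiv.Perm (Fin q)}
    (hπ : compatiblePerm J π) {k : Fin s} {j j' : Fin q} (hj : j ∈ J.blocks k)
    (hj' : j' ∈ J.blocks k) : compatiblePerm J (Equiv.swap j j' * π) := by
  intro l x
  rw [← hπ l x, Equiv.Perm.mul_apply]
  have hjj' : j ∈ J.blocks l ↔ j' ∈ J.blocks l := by
    rcases eq_or_ne k l with rfl | hkl
    · exact iff_of_true hj hj'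
    · exact iff_of_false (Finset.disjoint_left.1 (J.disjoint k l hkl) hj)
        (Finset.disjoint_left.1 (J.disjoint k l hkl) hj')
  rw [Equiv.swap_apply_def]
  split_ifs <;> simp [*]

theorem vertexPoint_sub_vertexPoint_swap_mul (π : Equiv.Perm (Fin q)) (j j' : Fin q) :
    vertexPoint q π - vertexPoint q (Equiv.swap j j' * π) =
      (((π.symm j : ℕ) : ℝ) - (π.symm j' : ℕ)) •
        (EuclideanSpace.single j 1 - EuclideanSpace.single j' 1) := by
  ext x
  simp only [vertexPoint, Equiv.Perm.mul_def, Equiv.symm_trans_apply, Equiv.symm_swap,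
    PiLp.sub_apply, PiLp.smul_apply, PiLp.single_apply, smul_eq_mul]
  rcases eq_or_ne x j with rfl | hxj
  · rcases eq_or_ne x j' with rfl | hxj' <;> simp [*]
  · rcases eq_or_ne x j' with rfl | hxj'
    · simp [hxj]
    · simp [Equiv.swap_apply_of_ne_of_ne hxj hxj', hxj, hxj']

theorem sub_metricProj_apply_eq_of_mem_block {u : ℕ} {κ : ℝ} (hκ : κ ≠ 0)
    (J' : OrderedPartition q u) {d : EuclideanSpace ℝ (Fin q)}
    (hd : metricProj (κ • permutohedron q) d ∈ intrinsicInterior ℝ (κ • face q u J'))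
    {i : Fin u} {j j' : Fin q} (hj : j ∈ J'.blocks i) (hj' : j' ∈ J'.blocks i) :
    (d - metricProj (κ • permutohedron q) d) j = (d - metricProj (κ • permutohedron q) d) j' := by
  rcases eq_or_ne j j' with rfl | hjj'
  · rfl
  obtain ⟨π, hπ⟩ := exists_compatiblePerm_of_nonempty
    (smul_set_nonempty.1 ⟨_, intrinsicInterior_subset hd⟩)
  have horth := inner_sub_metricProj_eq_zero ((isCompact_permutohedron q).smul κ)
    ((convex_permutohedron q).smul κ) (smul_set_mono (face_subset_permutohedron J')) hd
    (smul_mem_smul_set (vertexPoint_mem_face hπ))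
    (smul_mem_smul_set (vertexPoint_mem_face (hπ.swap_mul hj hj')))
  rw [← smul_sub, vertexPoint_sub_vertexPoint_swap_mul, inner_smul_right, inner_smul_right,
    inner_sub_right, EuclideanSpace.inner_single_right, EuclideanSpace.inner_single_right] at horth
  have hne : ((π.symm j : ℕ) : ℝ) - (π.symm j' : ℕ) ≠ 0 := by
    rw [sub_ne_zero]
    exact_mod_cast Fin.val_injective.ne (π.symm.injective.ne hjj')
  simp only [conj_trivial, one_mul, mul_eq_zero, hκ, hne, false_or, sub_eq_zero] at horth
  exact horth

end Permutohedron

theorem differences_constant_on_coarse_blocks_general (q s u : ℕ)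
    (κ : ℝ) (hκ : 0 < κ)
    (J : OrderedPartition q s) (J' : OrderedPartition q u)
    (ki : ℕ → ℕ)
    (hJ' : ∀ i : Fin u, J'.blocks i =
      (Finset.univ.filter
        (fun k : Fin s => ki (i : ℕ) ≤ (k : ℕ) ∧ (k : ℕ) < ki ((i : ℕ) + 1))).biUnion
        J.blocks)
    (c c' : EuclideanSpace ℝ (Fin q))
    (hc' : c' = metricProj (κ • permutohedron q) c)
    (t : Fin s → ℝ) (ht : ∀ k : Fin s, ∀ j ∈ J.blocks k, c j - c' j = t k)
    (hcl : c ∈ closure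
      (metricProj (κ • permutohedron q) ⁻¹' intrinsicInterior ℝ (κ • face q u J'))) :
    ∀ i < u, ∀ a b : Fin s,
      ki i ≤ (a : ℕ) → (a : ℕ) < ki (i + 1) →
      ki i ≤ (b : ℕ) → (b : ℕ) < ki (i + 1) → t a = t b := by
  intro i hi a b ha ha' hb hb'
  set P := metricProj (κ • permutohedron q)
  obtain ⟨j, hj⟩ := J.nonempty a
  obtain ⟨j', hj'⟩ := J.nonempty b
  have hblock : ∀ k : Fin s, ki i ≤ k → k < ki (i + 1) → J.blocks k ⊆ J'.blocks ⟨i, hi⟩ :=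
    fun k hk hk' x hx => by
      rw [hJ']
      exact Finset.mem_biUnion.2 ⟨k, by simp [hk, hk'], hx⟩
  have hP : Continuous P := (lipschitzWith_metricProj ((isCompact_permutohedron q).smul κ)
    ((convex_permutohedron q).smul κ) (permutohedron_nonempty q).smul_set).continuous
  have hclosed : IsClosed {d | (d - P d) j = (d - P d) j'} := by
    apply isClosed_eq <;> fun_prop
  have hc := closure_minimal (fun d hd => sub_metricProj_apply_eq_of_mem_block hκ.ne' J' hd
    (hblock a ha ha' hj) (hblock b hb hb' hj')) hclosed hcl
  rw [← ht a j hj, ← ht b j' hj', hc']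
  exact hc

/-- let `J′` be the coarsening of `J = (J_1,…,J_s)` determined by
`0 = k_0 < k_1 < … < k_u = s`, i.e. `J′_i = J_{k_{i−1}+1} ∪ … ∪ J_{k_i}`. If
`c′ = π_κ(c) ∈ relint(κ·τ_J)`, so that `t_k := c_j − c′_j` (`j ∈ J_k`) are well
defined, and `c` lies in the closure of `π_κ^{−1}(relint(κ·τ_{J′}))`, then the `t_k`
are constant on each coarse block: `t_{k_{i−1}+1} = … = t_{k_i}` for each `i`. -/
theorem differences_constant_on_coarse_blocks (q s u : ℕ) (hq : 1 ≤ q)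
    (κ : ℝ) (hκ : 0 < κ)
    (J : OrderedPartition q s) (J' : OrderedPartition q u)
    (ki : ℕ → ℕ) (hki0 : ki 0 = 0) (hkiu : ki u = s)
    (hkimono : ∀ i < u, ki i < ki (i + 1))
    (hJ' : ∀ i : Fin u, J'.blocks i =
      (Finset.univ.filter
        (fun k : Fin s => ki (i : ℕ) ≤ (k : ℕ) ∧ (k : ℕ) < ki ((i : ℕ) + 1))).biUnion
        J.blocks)
    (c c' : EuclideanSpace ℝ (Fin q))
    (hc' : c' = metricProj (κ • permutohedron q) c)
    (hrel : c' ∈ intrinsicInterior ℝ (κ • face q s J))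
    (t : Fin s → ℝ) (ht : ∀ k : Fin s, ∀ j ∈ J.blocks k, c j - c' j = t k)
    (hcl : c ∈ closure
      (metricProj (κ • permutohedron q) ⁻¹' intrinsicInterior ℝ (κ • face q u J'))) :
    ∀ i < u, ∀ a b : Fin s,
      ki i ≤ (a : ℕ) → (a : ℕ) < ki (i + 1) →
      ki i ≤ (b : ℕ) → (b : ℕ) < ki (i + 1) → t a = t b :=
  differences_constant_on_coarse_blocks_general q s u κ hκ J J' ki hJ' c c' hc' t ht hcl

end
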